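/- Let Q denote the Gaussian tail function Q(x) = ∫_x^∞ (1/√(2π)) e^{-t²/2} dt. Fix K ∈ ℕ, M > 0, σ > 0, and for each k = 0, …, K−1 let g_k ≥ 0, c_k ≥ 0, and let P_m^{(k)}(γ) = 1 - Q((γ - M(σ² + g_k))/(σ √(2M(σ² + 2g_k)))). Let J ∈ ℕ and for each j = 0, …, J−1 let S_j ⊆ {0, …, K−1} and ε_j ≥ 0. Suppose bounds γ_min,k and γ_max,k satisfy M σ² ≤ γ_min,k ≤ γ_max,k ≤ M(σ² + g_k) for every k. Then the feasible set {γ ∈ ℝ^K : Σ_{i ∈ S_j} c_i P_m^{(i)}(γ_i) ≤ ε_j for all j, and γ_min,k ≤ γ_k ≤ γ_max,k for all k} is a convex subset of ℝ^K. -/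

import Mathlib

/-- The Gaussian tail function `Q(x) = ∫_x^∞ (1/√(2π)) e^{-t²/2} dt`. -/
noncomputable def gaussQ (x : ℝ) : ℝ :=
  ∫ t in Set.Ioi x, (Real.sqrt (2 * Real.pi))⁻¹ * Real.exp (-t ^ 2 / 2)

/-!
`1 - Q` is the standard normal CDF, whose derivative, the Gaussian density, increases on
`(-∞, 0]`; hence `1 - Q` is convex there. Because `γ_k ≤ γ_max,k ≤ M(σ² + g_k)`, each
`P_m^{(k)}(γ_k)` is `1 - Q` evaluated at a nonpositive affine function of `γ_k`, so it is convex
on the box. The interference constraints are therefore sublevel sets of nonnegative combinations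
of convex functions, and the feasible set is their intersection with the box.
-/

open MeasureTheory Set ProbabilityTheory

section

variable {𝕜 E β ι : Type*} [Semiring 𝕜] [PartialOrder 𝕜] [AddCommMonoid E] [SMul 𝕜 E]
  [AddCommMonoid β] [PartialOrder β] [IsOrderedAddMonoid β] [Module 𝕜 β] {s : Set E}

theorem ConvexOn.finset_sum (hs : Convex 𝕜 s) (t : Finset ι) {f : ι → E → β}
    (hf : ∀ i ∈ t, ConvexOn 𝕜 s (f i)) : ConvexOn 𝕜 s (fun x => ∑ i ∈ t, f i x) := by
  classical
  induction t using Finset.induction_on with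
  | empty => simpa using convexOn_const 0 hs
  | insert i t hi ih =>
    simp only [Finset.sum_insert hi]
    exact (hf i (Finset.mem_insert_self i t)).add
      (ih fun j hj => hf j (Finset.mem_insert_of_mem hj))

theorem convex_setOf_forall_le_and_mem [PosSMulMono 𝕜 β] (hs : Convex 𝕜 s)
    {f : ι → E → β} (hf : ∀ i, ConvexOn 𝕜 s (f i)) (r : ι → β) :
    Convex 𝕜 {x | (∀ i, f i x ≤ r i) ∧ x ∈ s} :=
  fun _ hx _ hy _ _ ha hb hab =>
    ⟨fun i => ((hf i).convex_le (r i) ⟨hx.2, hx.1 i⟩ ⟨hy.2, hy.1 i⟩ ha hb hab).2,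
      hs hx.2 hy.2 ha hb hab⟩

end

lemma gaussQ_eq_integral_gaussianPDFReal (x : ℝ) :
    gaussQ x = ∫ t in Ioi x, gaussianPDFReal 0 1 t := by
  simp [gaussQ, gaussianPDFReal]

lemma hasDerivAt_gaussQ (x : ℝ) : HasDerivAt gaussQ (-gaussianPDFReal 0 1 x) x := by
  have hφ := integrable_gaussianPDFReal 0 1
  have hcont : Continuous (gaussianPDFReal 0 1) := by
    rw [gaussianPDFReal_def]
    fun_prop
  have hsplit : gaussQ = fun u => (∫ t in u..0, gaussianPDFReal 0 1 t) + gaussQ 0 := by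
    funext u
    simp only [gaussQ_eq_integral_gaussianPDFReal]
    exact (intervalIntegral.integral_interval_add_Ioi hφ.integrableOn hφ.integrableOn).symm
  rw [hsplit]
  exact (intervalIntegral.integral_hasDerivAt_left hφ.intervalIntegrable
    (hcont.stronglyMeasurableAtFilter _ _) hcont.continuousAt).add_const _

lemma monotoneOn_gaussianPDFReal_zero_one : MonotoneOn (gaussianPDFReal 0 1) (Iic 0) := by
  rintro u (hu : u ≤ 0) v (hv : v ≤ 0) huv
  simp only [gaussianPDFReal_def, NNReal.coe_one, sub_zero]
  gcongr _ * Real.exp ?_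
  nlinarith

lemma convexOn_one_sub_gaussQ : ConvexOn ℝ (Iic 0) (fun x => 1 - gaussQ x) := by
  have hderiv (x : ℝ) : HasDerivAt (fun x => 1 - gaussQ x) (gaussianPDFReal 0 1 x) x := by
    simpa using (hasDerivAt_gaussQ x).const_sub 1
  refine MonotoneOn.convexOn_of_deriv (convex_Iic 0)
    (fun x _ => (hderiv x).continuousAt.continuousWithinAt)
    (fun x _ => (hderiv x).differentiableAt.differentiableWithinAt) ?_
  rw [interior_Iic, funext fun x => (hderiv x).deriv]
  exact monotoneOn_gaussianPDFReal_zero_one.mono Iio_subset_Iic_self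

lemma convexOn_one_sub_gaussQ_div_sub {ι : Type*} (i : ι) (b d : ℝ) (hd : 0 ≤ d) :
    ConvexOn ℝ {x : ι → ℝ | x i ≤ b} (fun x => 1 - gaussQ ((x i - b) / d)) := by
  let g : (ι → ℝ) →ᵃ[ℝ] ℝ :=
    (d⁻¹ • LinearMap.proj i : (ι → ℝ) →ₗ[ℝ] ℝ).toAffineMap - AffineMap.const ℝ _ (b / d)
  have hg (x : ι → ℝ) : g x = (x i - b) / d := by
    change d⁻¹ * x i - b / d = _
    ring
  refine ((convexOn_one_sub_gaussQ.comp_affineMap g).subset (fun x hx => ?_)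
    (convex_halfSpace_le (LinearMap.proj i).isLinear b)).congr fun x _ => ?_
  · rw [mem_preimage, hg]
    exact div_nonpos_of_nonpos_of_nonneg (sub_nonpos.2 hx) hd
  · simp only [Function.comp_apply, hg]

theorem P2_feasible_set_convex_general (K J : ℕ) (M σ : ℝ) (hσ : 0 < σ)
    (g c : Fin K → ℝ) (hc : ∀ k, 0 ≤ c k)
    (S : Fin J → Finset (Fin K)) (ε : Fin J → ℝ)
    (γmin γmax : Fin K → ℝ)
    (hbounds : ∀ k, M * σ ^ 2 ≤ γmin k ∧ γmin k ≤ γmax k ∧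
      γmax k ≤ M * (σ ^ 2 + g k)) :
    Convex ℝ
      {γ : Fin K → ℝ |
        (∀ j : Fin J,
          ∑ i ∈ S j,
            c i * (1 - gaussQ ((γ i - M * (σ ^ 2 + g i)) /
              (σ * Real.sqrt (2 * M * (σ ^ 2 + 2 * g i))))) ≤ ε j) ∧
        (∀ k : Fin K, γmin k ≤ γ k ∧ γ k ≤ γmax k)} := by
  have hbox : Convex ℝ {γ : Fin K → ℝ | ∀ k, γmin k ≤ γ k ∧ γ k ≤ γmax k} :=
    fun _ hx _ hy _ _ ha hb hab k => convex_Icc (γmin k) (γmax k) (hx k) (hy k) ha hb hab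
  refine convex_setOf_forall_le_and_mem hbox (fun j => ConvexOn.finset_sum hbox _ fun i _ => ?_) ε
  have hterm := convexOn_one_sub_gaussQ_div_sub i (M * (σ ^ 2 + g i))
    (σ * Real.sqrt (2 * M * (σ ^ 2 + 2 * g i))) (by positivity)
  exact (hterm.smul (hc i)).subset (fun γ hγ => (hγ i).2.trans (hbounds i).2.2) hbox

/-- the feasible set of problem (P2)
`{γ ∈ ℝ^K : Σ_{i ∈ S_j} c_i P_m^{(i)}(γ_i) ≤ ε_j ∀j, γ_min,k ≤ γ_k ≤ γ_max,k ∀k}`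
is convex whenever `Mσ² ≤ γ_min,k ≤ γ_max,k ≤ M(σ² + g_k)` for every `k`. -/
theorem P2_feasible_set_convex (K J : ℕ) (M σ : ℝ) (hM : 0 < M) (hσ : 0 < σ)
    (g c : Fin K → ℝ) (hg : ∀ k, 0 ≤ g k) (hc : ∀ k, 0 ≤ c k)
    (S : Fin J → Finset (Fin K)) (ε : Fin J → ℝ) (hε : ∀ j, 0 ≤ ε j)
    (γmin γmax : Fin K → ℝ)
    (hbounds : ∀ k, M * σ ^ 2 ≤ γmin k ∧ γmin k ≤ γmax k ∧
      γmax k ≤ M * (σ ^ 2 + g k)) :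
    Convex ℝ
      {γ : Fin K → ℝ |
        (∀ j : Fin J,
          ∑ i ∈ S j,
            c i * (1 - gaussQ ((γ i - M * (σ ^ 2 + g i)) /
              (σ * Real.sqrt (2 * M * (σ ^ 2 + 2 * g i))))) ≤ ε j) ∧
        (∀ k : Fin K, γmin k ≤ γ k ∧ γ k ≤ γmax k)} :=
  P2_feasible_set_convex_general K J M σ hσ g c hc S ε γmin γmax hbounds
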